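/- arXiv:2506.12908 — 2 statements merged into one kernel-verified Lean document; each statement's English description precedes it below -/
import Mathlib

section
/- For all x ≥ 0, the modified Bessel function satisfies I₀(x) ≤ exp(x²/4)·cosh(x) ≤ exp(x²/4 + x); in particular log I₀(x) ≤ x²/4 + x. -/
/-- Modified Bessel function of the first kind of order zero. -/
noncomputable def besselI0 (x : ℝ) : ℝ := ∑' k : ℕ, (x / 2) ^ (2 * k) / (Nat.factorial k) ^ 2

lemma besselI0_aux_summable (x : ℝ) :
    Summable (fun k : ℕ => (x / 2) ^ (2 * k) / (Nat.factorial k) ^ 2) := by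
  apply Summable.of_nonneg_of_le (fun k => ?_) (fun k => ?_)
    (Real.summable_pow_div_factorial ((x / 2) ^ 2))
  · exact div_nonneg ((even_two_mul k).pow_nonneg _) (by positivity)
  · rw [pow_mul]
    apply div_le_div_of_nonneg_left (by positivity) (by positivity)
    have h1 : (1 : ℝ) ≤ (Nat.factorial k : ℝ) := by
      exact_mod_cast Nat.one_le_iff_ne_zero.2 k.factorial_ne_zero
    calc (Nat.factorial k : ℝ) = (Nat.factorial k : ℝ) * 1 := by ring
    _ ≤ (Nat.factorial k : ℝ) * (Nat.factorial k : ℝ) := by nlinarith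
    _ = (Nat.factorial k : ℝ) ^ 2 := by ring

lemma besselI0_le_exp_sq (x : ℝ) : besselI0 x ≤ Real.exp (x ^ 2 / 4) := by
  have hexp : Real.exp (x ^ 2 / 4) = ∑' k : ℕ, ((x / 2) ^ 2) ^ k / (Nat.factorial k) := by
    have h4 : x ^ 2 / 4 = (x / 2) ^ 2 := by ring
    rw [h4, Real.exp_eq_exp_ℝ, NormedSpace.exp_eq_tsum_div]
  rw [besselI0, hexp]
  apply Summable.tsum_le_tsum _ (besselI0_aux_summable x) (Real.summable_pow_div_factorial _)
  intro k
  rw [← pow_mul, pow_mul]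
  apply div_le_div_of_nonneg_left (by positivity) (by positivity)
  have h1 : (1 : ℝ) ≤ (Nat.factorial k : ℝ) := by
    exact_mod_cast Nat.one_le_iff_ne_zero.2 k.factorial_ne_zero
  nlinarith

lemma one_le_besselI0 (x : ℝ) : 1 ≤ besselI0 x := by
  have h0 := Summable.sum_le_tsum {0}
    (fun i _ => div_nonneg ((even_two_mul i).pow_nonneg (x / 2)) (by positivity))
    (besselI0_aux_summable x)
  simpa [besselI0] using h0

/-- For `x ≥ 0`, `I₀(x) ≤ exp(x²/4)·cosh(x) ≤ exp(x²/4 + x)`; in particular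
`log I₀(x) ≤ x²/4 + x`. -/
theorem besselI0_le_exp_cosh (x : ℝ) (hx : 0 ≤ x) :
    besselI0 x ≤ Real.exp (x ^ 2 / 4) * Real.cosh x ∧
      Real.exp (x ^ 2 / 4) * Real.cosh x ≤ Real.exp (x ^ 2 / 4 + x) ∧
      Real.log (besselI0 x) ≤ x ^ 2 / 4 + x := by
  have hcosh : (1 : ℝ) ≤ Real.cosh x := Real.one_le_cosh x
  have hcoshe : Real.cosh x ≤ Real.exp x := by
    rw [Real.cosh_eq]
    have : Real.exp (-x) ≤ Real.exp x := Real.exp_le_exp.2 (by linarith)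
    linarith
  have h1 : besselI0 x ≤ Real.exp (x ^ 2 / 4) * Real.cosh x := by
    calc besselI0 x ≤ Real.exp (x ^ 2 / 4) := besselI0_le_exp_sq x
    _ = Real.exp (x ^ 2 / 4) * 1 := by ring
    _ ≤ _ := by nlinarith [Real.exp_pos (x ^ 2 / 4)]
  have h2 : Real.exp (x ^ 2 / 4) * Real.cosh x ≤ Real.exp (x ^ 2 / 4 + x) := by
    rw [Real.exp_add]
    nlinarith [Real.exp_pos (x ^ 2 / 4)]
  refine ⟨h1, h2, ?_⟩
  have hpos : 0 < besselI0 x := lt_of_lt_of_le one_pos (one_le_besselI0 x)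
  calc Real.log (besselI0 x) ≤ Real.log (Real.exp (x ^ 2 / 4 + x)) := by
        apply Real.log_le_log hpos; linarith
  _ = x ^ 2 / 4 + x := Real.log_exp _
end

section
/- The function x ↦ log I₀(x) is convex on ℝ, where I₀ is the modified Bessel function of the first kind of order zero. -/
open MeasureTheory Real Set
open scoped ENNReal NNReal

lemma besselI0_term_nonneg (x : ℝ) (k : ℕ) :
    0 ≤ (x / 2) ^ (2 * k) / (Nat.factorial k : ℝ) ^ 2 := by
  apply div_nonneg _ (by positivity)
  rw [pow_mul]; positivity

lemma besselI0_summable (x : ℝ) :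
    Summable (fun k : ℕ => (x / 2) ^ (2 * k) / (Nat.factorial k : ℝ) ^ 2) := by
  have hle : ∀ k : ℕ, (x / 2) ^ (2 * k) / (Nat.factorial k : ℝ) ^ 2
      ≤ ((x / 2) ^ 2) ^ k / (Nat.factorial k : ℝ) := by
    intro k
    rw [pow_mul]
    have h1 : (1:ℝ) ≤ (Nat.factorial k : ℝ) := Nat.one_le_cast.mpr (Nat.factorial_pos k)
    have h2 : (Nat.factorial k : ℝ) ≤ (Nat.factorial k : ℝ) ^ 2 := by nlinarith
    exact div_le_div_of_nonneg_left (by positivity) (by linarith) h2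
  exact Summable.of_nonneg_of_le (besselI0_term_nonneg x) hle
    (Real.summable_pow_div_factorial _)

lemma besselI0_pos (x : ℝ) : 0 < besselI0 x := by
  have h := Summable.le_tsum (besselI0_summable x) 0 (fun j _ => besselI0_term_nonneg x j)
  simp only [Nat.factorial_zero, mul_zero, pow_zero, Nat.cast_one, one_pow, div_one] at h
  exact lt_of_lt_of_le one_pos h

lemma wallis_even (k : ℕ) :
    ∫ θ in (0:ℝ)..π, Real.cos θ ^ (2 * k)
      = π * (Nat.factorial (2 * k)) / (4 ^ k * (Nat.factorial k : ℝ) ^ 2) := by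
  induction k with
  | zero => simp
  | succ k ih =>
    have h : 2 * (k + 1) = 2 * k + 2 := by ring
    rw [h, integral_cos_pow, ih]
    rw [Real.sin_pi, Real.sin_zero]
    have h1 : (2 * k + 2).factorial = (2 * k + 2) * ((2 * k + 1) * (2 * k).factorial) := by
      rw [show 2 * k + 2 = (2 * k + 1) + 1 by ring, Nat.factorial_succ, Nat.factorial_succ]
    have h2 : (k + 1).factorial = (k + 1) * k.factorial := Nat.factorial_succ k
    rw [h1, h2]
    have hk : ((2:ℝ) * k + 2) ≠ 0 := by positivity
    have hf : ((2 * k).factorial : ℝ) ≠ 0 := by exact_mod_cast (Nat.factorial_pos _).ne'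
    have hf2 : ((k).factorial : ℝ) ≠ 0 := by exact_mod_cast (Nat.factorial_pos _).ne'
    push_cast
    field_simp
    ring

lemma wallis_odd (k : ℕ) : ∫ θ in (0:ℝ)..π, Real.cos θ ^ (2 * k + 1) = 0 := by
  induction k with
  | zero => simp
  | succ k ih =>
    have h : 2 * (k + 1) + 1 = (2 * k + 1) + 2 := by ring
    rw [h, integral_cos_pow, ih]
    rw [Real.sin_pi, Real.sin_zero]
    simp

lemma besselI0_eq_integral (x : ℝ) :
    besselI0 x = (1 / π) * ∫ θ in (0:ℝ)..π, Real.exp (x * Real.cos θ) := by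
  have hexp : ∀ θ : ℝ, Real.exp (x * Real.cos θ)
      = ∑' n : ℕ, (x * Real.cos θ) ^ n / (Nat.factorial n : ℝ) := by
    intro θ
    rw [Real.exp_eq_exp_ℝ, NormedSpace.exp_eq_tsum_div]
  have hswap : ∫ θ in (0:ℝ)..π, Real.exp (x * Real.cos θ)
      = ∑' n : ℕ, ∫ θ in (0:ℝ)..π, (x * Real.cos θ) ^ n / (Nat.factorial n : ℝ) := by
    rw [intervalIntegral.integral_of_le Real.pi_pos.le]
    simp_rw [intervalIntegral.integral_of_le Real.pi_pos.le]
    rw [← MeasureTheory.integral_tsum]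
    · exact integral_congr_ae (Filter.Eventually.of_forall fun θ => hexp θ)
    · intro n
      exact Continuous.aestronglyMeasurable
        (((continuous_const.mul Real.continuous_cos).pow n).div_const _)
    · apply ne_top_of_le_ne_top
        (b := ∑' n : ℕ, ENNReal.ofReal (|x| ^ n / (Nat.factorial n : ℝ) * π))
      · rw [← ENNReal.ofReal_tsum_of_nonneg (fun n => by positivity)
          ((Real.summable_pow_div_factorial |x|).mul_right π)]
        exact ENNReal.ofReal_ne_top
      · apply ENNReal.tsum_le_tsum
        intro n
        have hb : ∀ θ : ℝ, (‖(x * Real.cos θ) ^ n / (Nat.factorial n : ℝ)‖₊ : ℝ≥0∞)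
            ≤ ENNReal.ofReal (|x| ^ n / (Nat.factorial n : ℝ)) := by
          intro θ
          rw [← enorm_eq_nnnorm, ← ofReal_norm_eq_enorm]
          apply ENNReal.ofReal_le_ofReal
          have hn : ‖(x * Real.cos θ) ^ n / (Nat.factorial n : ℝ)‖
              = |x * Real.cos θ| ^ n / (Nat.factorial n : ℝ) := by
            rw [norm_div, norm_pow, Real.norm_eq_abs, Real.norm_eq_abs,
              abs_of_nonneg (by positivity : (0:ℝ) ≤ (Nat.factorial n : ℝ))]
          rw [hn]
          have hxc : |x * Real.cos θ| ≤ |x| := by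
            rw [abs_mul]
            calc |x| * |Real.cos θ| ≤ |x| * 1 := by
                  gcongr; exact Real.abs_cos_le_one θ
              _ = |x| := mul_one _
          gcongr
        calc ∫⁻ θ in Set.Ioc (0:ℝ) π, (‖(x * Real.cos θ) ^ n / (Nat.factorial n : ℝ)‖₊ : ℝ≥0∞)
            ≤ ∫⁻ _ in Set.Ioc (0:ℝ) π, ENNReal.ofReal (|x| ^ n / (Nat.factorial n : ℝ)) :=
              lintegral_mono fun θ => hb θ
          _ = ENNReal.ofReal (|x| ^ n / (Nat.factorial n : ℝ)) * volume (Set.Ioc (0:ℝ) π) := by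
              rw [MeasureTheory.lintegral_const, Measure.restrict_apply_univ]
          _ ≤ ENNReal.ofReal (|x| ^ n / (Nat.factorial n : ℝ) * π) := by
              rw [Real.volume_Ioc, sub_zero, ← ENNReal.ofReal_mul (by positivity)]
  set g : ℕ → ℝ := fun n => x ^ n / (Nat.factorial n : ℝ) * ∫ θ in (0:ℝ)..π, Real.cos θ ^ n
    with hg
  have hint : ∀ n : ℕ, (∫ θ in (0:ℝ)..π, (x * Real.cos θ) ^ n / (Nat.factorial n : ℝ)) = g n := by
    intro n
    rw [hg]
    calc (∫ θ in (0:ℝ)..π, (x * Real.cos θ) ^ n / (Nat.factorial n : ℝ))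
        = ∫ θ in (0:ℝ)..π, x ^ n / (Nat.factorial n : ℝ) * Real.cos θ ^ n := by
          apply intervalIntegral.integral_congr
          intro θ _
          dsimp only
          rw [mul_pow]; ring
      _ = x ^ n / (Nat.factorial n : ℝ) * ∫ θ in (0:ℝ)..π, Real.cos θ ^ n :=
          intervalIntegral.integral_const_mul _ _
  have heven : ∀ k : ℕ, g (2 * k) = π * ((x / 2) ^ (2 * k) / (Nat.factorial k : ℝ) ^ 2) := by
    intro k
    rw [hg]
    simp only
    rw [wallis_even]
    have hf : ((2 * k).factorial : ℝ) ≠ 0 := by exact_mod_cast (Nat.factorial_pos _).ne'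
    have hf2 : ((k).factorial : ℝ) ≠ 0 := by exact_mod_cast (Nat.factorial_pos _).ne'
    have h4 : (4 : ℝ) ^ k = 2 ^ (2 * k) := by rw [pow_mul]; norm_num
    rw [div_pow, h4]
    field_simp
  have hodd : ∀ k : ℕ, g (2 * k + 1) = 0 := by
    intro k; rw [hg]; simp only [wallis_odd, mul_zero]
  have hse : Summable fun k => g (2 * k) := by
    apply Summable.congr ((besselI0_summable x).mul_left π)
    intro k; rw [heven k]
  have hso : Summable fun k => g (2 * k + 1) := by
    apply Summable.congr summable_zero
    intro k; rw [hodd k]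
  have htot := tsum_even_add_odd hse hso
  rw [hswap]
  simp_rw [hint]
  rw [← htot]
  have : (∑' k : ℕ, g (2 * k)) = π * besselI0 x := by
    rw [besselI0, ← tsum_mul_left]
    exact tsum_congr heven
  rw [this]
  have h0 : (∑' k : ℕ, g (2 * k + 1)) = 0 := by
    simp_rw [hodd]; exact tsum_zero
  rw [h0, add_zero]
  field_simp

lemma besselI0_holder (x y a b : ℝ) (ha : 0 < a) (hb : 0 < b) (hab : a + b = 1) :
    besselI0 (a * x + b * y) ≤ besselI0 x ^ a * besselI0 y ^ b := by
  set μ := volume.restrict (Set.Ioc (0:ℝ) π) with hμdef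
  haveI : IsFiniteMeasure μ := by
    constructor
    rw [hμdef, Measure.restrict_apply_univ, Real.volume_Ioc]
    exact ENNReal.ofReal_lt_top
  have hpq : Real.HolderConjugate (1 / a) (1 / b) := by
    constructor
    · rw [one_div, one_div, inv_inv, inv_inv, inv_one]; exact hab
    · positivity
    · positivity
  have hmem : ∀ (z : ℝ) (p : ℝ≥0∞), MemLp (fun θ : ℝ => Real.exp (z * Real.cos θ)) p μ := by
    intro z p
    have hc : Continuous fun θ : ℝ => Real.exp (z * Real.cos θ) :=
      Real.continuous_exp.comp (continuous_const.mul Real.continuous_cos)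
    apply MemLp.of_bound hc.aestronglyMeasurable (Real.exp |z|)
    filter_upwards with θ
    rw [Real.norm_of_nonneg (Real.exp_pos _).le]
    apply Real.exp_le_exp.mpr
    calc z * Real.cos θ ≤ |z * Real.cos θ| := le_abs_self _
      _ = |z| * |Real.cos θ| := abs_mul _ _
      _ ≤ |z| * 1 := by gcongr; exact Real.abs_cos_le_one θ
      _ = |z| := mul_one _
  have key := MeasureTheory.integral_mul_le_Lp_mul_Lq_of_nonneg hpq
    (f := fun θ : ℝ => Real.exp (a * x * Real.cos θ))
    (g := fun θ : ℝ => Real.exp (b * y * Real.cos θ))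
    (Filter.Eventually.of_forall fun θ => (Real.exp_pos _).le)
    (Filter.Eventually.of_forall fun θ => (Real.exp_pos _).le)
    (hmem _ _) (hmem _ _)
  have hL : (∫ θ, Real.exp (a * x * Real.cos θ) * Real.exp (b * y * Real.cos θ) ∂μ)
      = ∫ θ, Real.exp ((a * x + b * y) * Real.cos θ) ∂μ := by
    apply integral_congr_ae
    filter_upwards with θ
    rw [← Real.exp_add]; ring_nf
  have hR1 : (∫ θ, Real.exp (a * x * Real.cos θ) ^ (1 / a) ∂μ)
      = ∫ θ, Real.exp (x * Real.cos θ) ∂μ := by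
    apply integral_congr_ae
    filter_upwards with θ
    rw [← Real.exp_mul]
    congr 1
    field_simp
  have hR2 : (∫ θ, Real.exp (b * y * Real.cos θ) ^ (1 / b) ∂μ)
      = ∫ θ, Real.exp (y * Real.cos θ) ∂μ := by
    apply integral_congr_ae
    filter_upwards with θ
    rw [← Real.exp_mul]
    congr 1
    field_simp
  rw [hL, hR1, hR2, one_div_one_div, one_div_one_div] at key
  have hπ : (0:ℝ) < 1 / π := by positivity
  have hIoc : ∀ z : ℝ, (∫ θ in (0:ℝ)..π, Real.exp (z * Real.cos θ)) = ∫ θ, Real.exp (z * Real.cos θ) ∂μ := by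
    intro z
    rw [intervalIntegral.integral_of_le Real.pi_pos.le, hμdef]
  have hnn : ∀ z : ℝ, 0 ≤ ∫ θ, Real.exp (z * Real.cos θ) ∂μ := by
    intro z
    exact integral_nonneg fun θ => (Real.exp_pos _).le
  calc besselI0 (a * x + b * y)
      = (1 / π) * ∫ θ, Real.exp ((a * x + b * y) * Real.cos θ) ∂μ := by
        rw [besselI0_eq_integral, hIoc]
    _ ≤ (1 / π) * ((∫ θ, Real.exp (x * Real.cos θ) ∂μ) ^ a * (∫ θ, Real.exp (y * Real.cos θ) ∂μ) ^ b) := by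
        apply mul_le_mul_of_nonneg_left key hπ.le
    _ = ((1 / π) ^ a * (∫ θ, Real.exp (x * Real.cos θ) ∂μ) ^ a)
        * ((1 / π) ^ b * (∫ θ, Real.exp (y * Real.cos θ) ∂μ) ^ b) := by
        rw [show ((1:ℝ)/π) ^ a * (∫ θ, Real.exp (x * Real.cos θ) ∂μ) ^ a
            * ((1 / π) ^ b * (∫ θ, Real.exp (y * Real.cos θ) ∂μ) ^ b)
            = ((1 / π) ^ a * (1 / π) ^ b) * ((∫ θ, Real.exp (x * Real.cos θ) ∂μ) ^ a
              * (∫ θ, Real.exp (y * Real.cos θ) ∂μ) ^ b) by ring]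
        rw [← Real.rpow_add hπ, hab, Real.rpow_one]
    _ = besselI0 x ^ a * besselI0 y ^ b := by
        rw [besselI0_eq_integral x, besselI0_eq_integral y, hIoc, hIoc,
          Real.mul_rpow hπ.le (hnn x), Real.mul_rpow hπ.le (hnn y)]

/-- `x ↦ log I₀(x)` is convex on `ℝ`. -/
theorem log_besselI0_convex :
    ConvexOn ℝ Set.univ (fun x : ℝ => Real.log (besselI0 x)) := by
  refine convexOn_iff_forall_pos.mpr ⟨convex_univ, fun x _ y _ a b ha hb hab => ?_⟩
  simp only [smul_eq_mul]
  rw [← Real.log_rpow (besselI0_pos x), ← Real.log_rpow (besselI0_pos y),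
    ← Real.log_mul (Real.rpow_pos_of_pos (besselI0_pos x) a).ne'
      (Real.rpow_pos_of_pos (besselI0_pos y) b).ne']
  · apply Real.log_le_log (besselI0_pos _)
    exact besselI0_holder x y a b ha hb hab
end
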